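/- Let ω be a hermitian positive linear functional on a non-unital complex *-algebra A, and let γ > 0 satisfy ‖ω a‖² ≤ γ · (ω (star a * a)).re for all a ∈ A. Then the extension ω^e with parameter γ is hermitian on the unitization, i.e. ω^e (star X) = conj (ω^e X) for every X in Unitization ℂ A, and positive, i.e. for every X in Unitization ℂ A the value ω^e (star X * X) has zero imaginary part and nonnegative real part. -/

import Mathlib

/-- The extension `ω^e` with parameter `γ` of a linear functional `ω` on a non-unital
complex *-algebra `A` to the unitization `Unitization ℂ A`:
`ω^e((λ, x)) = ω(x) + λ·γ`. -/
noncomputable def omegaExt {A : Type*} [NonUnitalRing A] [Module ℂ A]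
    (ω : A →ₗ[ℂ] ℂ) (γ : ℝ) : Unitization ℂ A → ℂ :=
  fun X => ω X.snd + X.fst * γ

/-! Since `γ` is real, `ω^e` inherits the hermitian property of `ω`, and
`ω^e((λ, x)* (λ, x)) = ω(x* x) + 2 Re(conj λ · ω x) + |λ|² γ` is real. Multiplied by `γ` it is
at least `|ω x|² - 2γ|λ||ω x| + γ²|λ|² = (γ|λ| - |ω x|)²` by the bound `|ω x|² ≤ γ ω(x* x)`. -/

open ComplexConjugate

theorem Complex.add_two_mul_re_conj_mul_add_nonneg {γ B : ℝ} (hγ : 0 < γ) {z w : ℂ}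
    (h : ‖w‖ ^ 2 ≤ γ * B) : 0 ≤ B + 2 * (conj z * w).re + ‖z‖ ^ 2 * γ := by
  have hre : -(‖z‖ * ‖w‖) ≤ (conj z * w).re := by
    simpa [norm_mul] using neg_le_of_abs_le (Complex.abs_re_le_norm (conj z * w))
  nlinarith [sq_nonneg (γ * ‖z‖ - ‖w‖), norm_nonneg z, norm_nonneg w]

section Extension

variable {A : Type*} [NonUnitalRing A] [StarRing A] [Module ℂ A] {ω : A →ₗ[ℂ] ℂ}

theorem omegaExt_star (hω : ∀ x, ω (star x) = conj (ω x)) (γ : ℝ) (X : Unitization ℂ A) :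
    omegaExt ω γ (star X) = conj (omegaExt ω γ X) := by
  simp [omegaExt, hω]

theorem omegaExt_star_mul_self (hω : ∀ x, ω (star x) = conj (ω x)) (γ : ℝ)
    (X : Unitization ℂ A) :
    omegaExt ω γ (star X * X) = (((ω (star X.snd * X.snd)).re +
      2 * (conj X.fst * ω X.snd).re + ‖X.fst‖ ^ 2 * γ : ℝ) : ℂ) := by
  have hreal : ((ω (star X.snd * X.snd)).re : ℂ) = ω (star X.snd * X.snd) := by
    rw [← Complex.conj_eq_iff_re, ← hω, star_mul, star_star]
  have hexpand : omegaExt ω γ (star X * X) = ω (star X.snd * X.snd) +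
      (conj X.fst * ω X.snd + conj (conj X.fst * ω X.snd)) + X.fst * conj X.fst * γ := by
    simp only [omegaExt, Unitization.snd_mul, Unitization.fst_mul, Unitization.fst_star,
      Unitization.snd_star, map_add, map_smul, smul_eq_mul, hω, RCLike.star_def, map_mul,
      Complex.conj_conj]
    ring
  rw [hexpand, Complex.add_conj, Complex.mul_conj, Complex.normSq_eq_norm_sq]
  push_cast
  rw [hreal]

end Extension

theorem extension_hermitian_positive_general {A : Type*} [NonUnitalRing A] [StarRing A]
    [Module ℂ A]
    (ω : A →ₗ[ℂ] ℂ)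
    (hherm : ∀ x : A, ω (star x) = starRingEnd ℂ (ω x))
    (γ : ℝ) (hγ : 0 < γ)
    (hHB : ∀ a : A, ‖ω a‖ ^ 2 ≤ γ * (ω (star a * a)).re) :
    (∀ X : Unitization ℂ A, omegaExt ω γ (star X) = starRingEnd ℂ (omegaExt ω γ X)) ∧
    (∀ X : Unitization ℂ A, (omegaExt ω γ (star X * X)).im = 0 ∧
      0 ≤ (omegaExt ω γ (star X * X)).re) := by
  refine ⟨omegaExt_star hherm γ, fun X => ?_⟩
  rw [omegaExt_star_mul_self hherm, Complex.ofReal_im, Complex.ofReal_re]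
  exact ⟨rfl, Complex.add_two_mul_re_conj_mul_add_nonneg hγ (hHB X.snd)⟩

/-- If `ω` is a hermitian positive linear functional on a non-unital complex *-algebra
satisfying (HB) with Hilbert bound `γ`, then the extension `ω^e` with parameter `γ`
is hermitian and positive on the unitization. -/
theorem extension_hermitian_positive {A : Type*} [NonUnitalRing A] [StarRing A]
    [Module ℂ A] [StarModule ℂ A] [SMulCommClass ℂ A A] [IsScalarTower ℂ A A]
    (ω : A →ₗ[ℂ] ℂ)
    (hpos : ∀ a : A, (ω (star a * a)).im = 0 ∧ 0 ≤ (ω (star a * a)).re)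
    (hherm : ∀ x : A, ω (star x) = starRingEnd ℂ (ω x))
    (γ : ℝ) (hγ : 0 < γ)
    (hHB : ∀ a : A, ‖ω a‖ ^ 2 ≤ γ * (ω (star a * a)).re) :
    (∀ X : Unitization ℂ A, omegaExt ω γ (star X) = starRingEnd ℂ (omegaExt ω γ X)) ∧
    (∀ X : Unitization ℂ A, (omegaExt ω γ (star X * X)).im = 0 ∧
      0 ≤ (omegaExt ω γ (star X * X)).re) :=
  extension_hermitian_positive_general ω hherm γ hγ hHB
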